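/- arXiv:2509.02071 — 2 statements merged into one kernel-verified Lean document; each statement's English description precedes it below -/
import Mathlib

section
/- Let V be a real vector space and let a₁, b₁, a₂, b₂ ∈ V be vectors such that {a₁, b₁} is linearly independent and {a₂, b₂} is linearly independent. Then in the exterior algebra of V, the wedge product (a₁ ∧ b₁) ∧ (a₂ ∧ b₂) equals 0 if and only if the subspaces span{a₁, b₁} and span{a₂, b₂} have nontrivial intersection (i.e., their intersection is not the zero subspace). Geometrically: two lines, represented as simple bivectors, lie in a common plane if and only if their wedge product vanishes. -/
/-!
The product is the fourfold wedge of `a₁, b₁, a₂, b₂`. Over a field a wedge of vectors vanishes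
exactly when they are linearly dependent, and two independent pairs together are dependent
exactly when their spans meet nontrivially.
-/

open ExteriorAlgebra

theorem linearIndependent_fin_append_iff {R M : Type*} [Ring R] [AddCommGroup M] [Module R M]
    {m n : ℕ} {u : Fin m → M} {v : Fin n → M} (hu : LinearIndependent R u)
    (hv : LinearIndependent R v) :
    LinearIndependent R (Fin.append u v) ↔
      Disjoint (Submodule.span R (Set.range u)) (Submodule.span R (Set.range v)) := by
  rw [← linearIndependent_equiv' finSumFinEquiv (g := Sum.elim u v) (by ext (i | j) <;> simp),
    linearIndependent_sum]
  simp [hu, hv]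

namespace ExteriorAlgebra

section Field

variable {K V : Type*} [Field K] [AddCommGroup V] [Module K V] {n : ℕ} {v : Fin n → V}

/- `ιMulti K n v` is the member of the family of `n`-fold products of `v` indexed by all of
`Fin n`, and that family is linearly independent. -/
theorem ιMulti_ne_zero_of_linearIndependent (hv : LinearIndependent K v) :
    ιMulti K n v ≠ 0 := by
  let univ : Set.powersetCard (Fin n) n := ⟨Finset.univ, Finset.card_fin n⟩
  have h_id : ⇑(Set.powersetCard.ofFinEmbEquiv.symm univ) = id :=
    (Finset.orderEmbOfFin_unique _ (fun _ => Finset.mem_univ _) strictMono_id).symm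
  have := (exteriorPower.ιMulti_family_linearIndependent_field (n := n) hv).ne_zero univ
  rwa [exteriorPower.ιMulti_family, h_id, Function.comp_id, ne_eq, ← Submodule.coe_eq_zero,
    exteriorPower.ιMulti_apply_coe] at this

theorem ιMulti_eq_zero_iff : ιMulti K n v = 0 ↔ ¬LinearIndependent K v :=
  ⟨fun h hv => ιMulti_ne_zero_of_linearIndependent hv h, (ιMulti K n).map_linearDependent v⟩

end Field

theorem ι_mul_ι_eq_ιMulti {R M : Type*} [CommRing R] [AddCommGroup M] [Module R M] (a b : M) :
    ι R a * ι R b = ιMulti R 2 ![a, b] := by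
  simp [ιMulti_apply]

end ExteriorAlgebra

/-- **Coplanarity criterion for simple bivectors.**
For vectors `a₁, b₁, a₂, b₂` in a real vector space `V` with `{a₁, b₁}` and `{a₂, b₂}`
each linearly independent, the wedge product `(a₁ ∧ b₁) ∧ (a₂ ∧ b₂)` in the exterior
algebra of `V` vanishes if and only if the planes `span {a₁, b₁}` and `span {a₂, b₂}`
intersect nontrivially (i.e. the two lines represented by the simple bivectors lie in
a common plane). -/
theorem simple_bivectors_wedge_eq_zero_iff_spans_inter_ne_bot
    {V : Type*} [AddCommGroup V] [Module ℝ V]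
    (a₁ b₁ a₂ b₂ : V)
    (h₁ : LinearIndependent ℝ ![a₁, b₁])
    (h₂ : LinearIndependent ℝ ![a₂, b₂]) :
    (ExteriorAlgebra.ι ℝ a₁ * ExteriorAlgebra.ι ℝ b₁) *
      (ExteriorAlgebra.ι ℝ a₂ * ExteriorAlgebra.ι ℝ b₂) = 0 ↔
      Submodule.span ℝ ({a₁, b₁} : Set V) ⊓ Submodule.span ℝ ({a₂, b₂} : Set V) ≠ ⊥ := by
  rw [ι_mul_ι_eq_ιMulti, ι_mul_ι_eq_ιMulti, ιMulti_mul_ιMulti, ιMulti_eq_zero_iff,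
    linearIndependent_fin_append_iff h₁ h₂, disjoint_iff, Matrix.range_cons_cons_empty,
    Matrix.range_cons_cons_empty]
end

section
/- Let q, d ∈ ℝ³ with d ≠ 0, and let P = (p, w) be a homogeneous point lying on the Plücker line L(q, d), i.e., either w ≠ 0 and p/w = q + t d for some t ∈ ℝ, or w = 0 and p = c d for some c ∈ ℝ. Then for every homogeneous point Q = (p', w') ∈ ℝ³ × ℝ, the reciprocal product of L(q, d) with the join P ∨ Q vanishes: ⟨L(q, d), P ∨ Q⟩ = 0. -/
open Matrix

/-- The cross product on `ℝ³`. -/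
def cross3 (a b : Fin 3 → ℝ) : Fin 3 → ℝ := crossProduct a b

/-- The Plücker line through the point `q` with direction `d`:
`L(q, d) = (d, q × d)`. -/
def pluckerLine (q d : Fin 3 → ℝ) : (Fin 3 → ℝ) × (Fin 3 → ℝ) := (d, cross3 q d)

/-- The join of two homogeneous points `P₁ = (p₁, w₁)` and `P₂ = (p₂, w₂)`:
`P₁ ∨ P₂ = (w₁ p₂ − w₂ p₁, p₁ × p₂)`. -/
def joinPts (P Q : (Fin 3 → ℝ) × ℝ) : (Fin 3 → ℝ) × (Fin 3 → ℝ) :=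
  (P.2 • Q.1 - Q.2 • P.1, cross3 P.1 Q.1)

/-- The reciprocal product of two Plücker lines `(d₁, m₁)` and `(d₂, m₂)`:
`⟨L₁, L₂⟩ = d₁ ⬝ m₂ + d₂ ⬝ m₁`. -/
def recipProd (L₁ L₂ : (Fin 3 → ℝ) × (Fin 3 → ℝ)) : ℝ := L₁.1 ⬝ᵥ L₂.2 + L₂.1 ⬝ᵥ L₁.2

/-- A homogeneous point `P = (p, w)` lies on the Plücker line `L(q, d)` if either it is a
Euclidean point of the line (`w ≠ 0` and `p / w = q + t d` for some `t`), or it is an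
infinite point in the direction of the line (`w = 0` and `p = c d` for some `c`). -/
def OnLine (q d : Fin 3 → ℝ) (P : (Fin 3 → ℝ) × ℝ) : Prop :=
  (P.2 ≠ 0 ∧ ∃ t : ℝ, P.2⁻¹ • P.1 = q + t • d) ∨ (P.2 = 0 ∧ ∃ c : ℝ, P.1 = c • d)

/-- If a homogeneous point `P` lies on the Plücker line `L(q, d)` (with `d ≠ 0`), then the
reciprocal product of `L(q, d)` with the join `P ∨ Q` vanishes for every homogeneous
point `Q`. -/
theorem recipProd_line_join_eq_zero_of_onLine
    (q d : Fin 3 → ℝ) (hd : d ≠ 0)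
    (P : (Fin 3 → ℝ) × ℝ) (hP : OnLine q d P) :
    ∀ Q : (Fin 3 → ℝ) × ℝ, recipProd (pluckerLine q d) (joinPts P Q) = 0 := by
  obtain ⟨b, hb⟩ : ∃ b : ℝ, P.1 = P.2 • q + b • d := by
    rcases hP with ⟨hw, t, ht⟩ | ⟨hw, c, hc⟩
    · refine ⟨P.2 * t, ?_⟩
      have := congrArg (P.2 • ·) ht
      simpa [smul_smul, mul_inv_cancel₀ hw, smul_add] using this
    · exact ⟨c, by simp [hw, hc]⟩
  intro Q
  have h0 := congrFun hb 0
  have h1 := congrFun hb 1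
  have h2 := congrFun hb 2
  simp only [Pi.add_apply, Pi.smul_apply, smul_eq_mul] at h0 h1 h2
  simp only [recipProd, pluckerLine, joinPts, cross3, cross_apply, dotProduct,
    Fin.sum_univ_three, Pi.sub_apply, Pi.smul_apply, smul_eq_mul, cons_val_zero,
    cons_val_one, head_cons, cons_val_two, tail_cons]
  rw [h0, h1, h2]; ring
end
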